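/- There exists a constant C > 0 such that for every t ∈ ℝ and every φ : ℤ_{≥1} → ℂ with Σ_{k≥1} |φ(k)| < ∞, the solution of the discrete Schrödinger equation on the positive integers with Neumann boundary condition u(t,0) = u(t,1), given by u(t,j) := Σ_{k≥1} (K_t(j-k) + K_t(j+k-1)) φ(k) for j ≥ 1, satisfies sup_{j≥1} |u(t,j)| ≤ C (1+|t|)^{-1/3} Σ_{k≥1} |φ(k)|. -/

import Mathlib

/-!
Since `4 sin²(ξ/2) = 2 - 2 cos ξ`, the kernel is `(2π)⁻¹ ∫_{-π}^{π} e^{iφ(ξ)} dξ` with phase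
`φ(ξ) = 2t cos ξ - 2t + jξ`, so `φ'' = -2t cos ξ` and `φ''' = 2t sin ξ`. As `|cos ξ|` and
`|sin ξ|` are never both below `1/2`, van der Corput's lemma of order two or three bounds each
piece of the integral by `O(|t|^{-1/3})` uniformly in `j`; with the trivial bound `2π` this gives
`|K_t(j)| ≲ (1 + |t|)^{-1/3}`. The reflected kernel `K_t(j-k) + K_t(j+k-1)` obeys twice this
bound, and the estimate follows by summing against `|φ(k)|`.
-/

open Real MeasureTheory

noncomputable def schrodingerKernel (t : ℝ) (j : ℤ) : ℂ :=
  (1 / (2 * Real.pi)) * ∫ ξ in (-Real.pi)..Real.pi,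
    Complex.exp (-4 * Complex.I * (t : ℂ) * ((Real.sin (ξ / 2) : ℂ)) ^ 2) *
      Complex.exp (Complex.I * (j : ℂ) * (ξ : ℂ))

open Set

noncomputable def expPhase (φ : ℝ → ℝ) (x : ℝ) : ℂ := Complex.exp (Complex.I * φ x)

@[simp] lemma norm_expPhase (φ : ℝ → ℝ) (x : ℝ) : ‖expPhase φ x‖ = 1 := by
  simp [expPhase, Complex.norm_exp]

lemma hasDerivAt_expPhase {φ : ℝ → ℝ} {φ' x : ℝ} (h : HasDerivAt φ φ' x) :
    HasDerivAt (expPhase φ) (Complex.I * φ' * expPhase φ x) x :=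
  ((h.ofReal_comp.const_mul Complex.I).cexp).congr_deriv (mul_comm _ _)

lemma continuousOn_expPhase {φ : ℝ → ℝ} {s : Set ℝ} (h : ContinuousOn φ s) :
    ContinuousOn (expPhase φ) s :=
  Complex.continuous_exp.comp_continuousOn
    (continuousOn_const.mul (Complex.continuous_ofReal.comp_continuousOn h))

lemma norm_integral_expPhase_le_length (φ : ℝ → ℝ) {a b : ℝ} (hab : a ≤ b) :
    ‖∫ x in a..b, expPhase φ x‖ ≤ b - a := by
  simpa [abs_of_nonneg (sub_nonneg.2 hab)] using
    intervalIntegral.norm_integral_le_of_norm_le_const (C := 1) (a := a) (b := b)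
      (fun x _ => (norm_expPhase φ x).le)

lemma intervalIntegral_conj {f : ℝ → ℂ} {a b : ℝ} :
    ∫ x in a..b, (starRingEnd ℂ) (f x) = (starRingEnd ℂ) (∫ x in a..b, f x) := by
  rw [intervalIntegral, intervalIntegral, integral_conj, integral_conj, map_sub]

lemma norm_integral_expPhase_neg (φ : ℝ → ℝ) (a b : ℝ) :
    ‖∫ x in a..b, expPhase (fun y => -φ y) x‖ = ‖∫ x in a..b, expPhase φ x‖ := by
  have hconj (x : ℝ) : expPhase (fun y => -φ y) x = (starRingEnd ℂ) (expPhase φ x) := by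
    simp only [expPhase, ← Complex.exp_conj, map_mul, Complex.conj_I, Complex.conj_ofReal,
      Complex.ofReal_neg, neg_mul, mul_neg]
  simp only [hconj, intervalIntegral_conj, RCLike.norm_conj]

lemma mul_sub_le_sub_of_le_hasDerivAt {g g' : ℝ → ℝ} {a b lam : ℝ}
    (hg : ∀ x ∈ Icc a b, HasDerivAt g (g' x) x) (hlow : ∀ x ∈ Icc a b, lam ≤ g' x)
    {x y : ℝ} (hx : x ∈ Icc a b) (hy : y ∈ Icc a b) (hxy : x ≤ y) :
    lam * (y - x) ≤ g y - g x :=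
  (convex_Icc a b).mul_sub_le_image_sub_of_le_deriv
    (fun z hz => (hg z hz).continuousAt.continuousWithinAt)
    (fun z hz => (hg z (interior_subset hz)).differentiableAt.differentiableWithinAt)
    (fun z hz => (hg z (interior_subset hz)).deriv ▸ hlow z (interior_subset hz)) x hx y hy hxy

/-- A function growing at rate at least `lam` stays below, resp. above, the line of slope `lam`
through some point `x₀` (a zero of `g`, or an endpoint if `g` has constant sign). -/
lemma exists_pivot_of_le_hasDerivAt {g g' : ℝ → ℝ} {a b lam : ℝ} (hab : a ≤ b)
    (hg : ∀ x ∈ Icc a b, HasDerivAt g (g' x) x) (hlow : ∀ x ∈ Icc a b, lam ≤ g' x) :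
    ∃ x₀ ∈ Icc a b, ∀ x ∈ Icc a b,
      (x < x₀ → g x ≤ lam * (x - x₀)) ∧ (x₀ < x → lam * (x - x₀) ≤ g x) := by
  obtain ⟨x₀, hx₀, hleft, hright⟩ :
      ∃ x₀ ∈ Icc a b, (x₀ = a ∨ g x₀ ≤ 0) ∧ (x₀ = b ∨ 0 ≤ g x₀) := by
    by_cases ha : 0 ≤ g a
    · exact ⟨a, left_mem_Icc.2 hab, Or.inl rfl, Or.inr ha⟩
    by_cases hb : g b ≤ 0
    · exact ⟨b, right_mem_Icc.2 hab, Or.inr hb, Or.inl rfl⟩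
    obtain ⟨x₀, hx₀, hzero⟩ := intermediate_value_Icc hab
      (fun x hx => (hg x hx).continuousAt.continuousWithinAt)
      ⟨(not_le.1 ha).le, (not_le.1 hb).le⟩
    exact ⟨x₀, hx₀, Or.inr hzero.le, Or.inr hzero.ge⟩
  refine ⟨x₀, hx₀, fun x hx => ⟨fun hlt => ?_, fun hlt => ?_⟩⟩
  · rcases hleft with rfl | hneg
    · exact absurd hx.1 (not_le.2 hlt)
    · linarith [mul_sub_le_sub_of_le_hasDerivAt hg hlow hx hx₀ hlt.le]
  · rcases hright with rfl | hpos
    · exact absurd hx.2 (not_le.2 hlt)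
    · linarith [mul_sub_le_sub_of_le_hasDerivAt hg hlow hx₀ hx hlt.le]

lemma norm_integral_le_of_adjacent_intervals {E : Type*} [NormedAddCommGroup E] [NormedSpace ℝ E]
    {f : ℝ → E} {a b c d : ℝ} (hab : IntervalIntegrable f volume a b)
    (hbc : IntervalIntegrable f volume b c) (hcd : IntervalIntegrable f volume c d) :
    ‖∫ x in a..d, f x‖ ≤ ‖∫ x in a..b, f x‖ + ‖∫ x in b..c, f x‖ + ‖∫ x in c..d, f x‖ := by
  rw [← intervalIntegral.integral_add_adjacent_intervals (hab.trans hbc) hcd,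
    ← intervalIntegral.integral_add_adjacent_intervals hab hbc]
  exact (norm_add_le _ _).trans (add_le_add_left (norm_add_le _ _) _)

/-- The splitting step of van der Corput's lemma; the window of width `2δ` around `x₀` is
bounded trivially. -/
lemma norm_integral_le_of_norm_integral_tails_le {E : Type*} [NormedAddCommGroup E]
    [NormedSpace ℝ E] {f : ℝ → E} {a b x₀ δ B : ℝ} (hx₀ : x₀ ∈ Icc a b) (hδ : 0 ≤ δ)
    (hB : 0 ≤ B) (hf : IntervalIntegrable f volume a b) (hf1 : ∀ x ∈ Icc a b, ‖f x‖ ≤ 1)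
    (hleft : ∀ c, a < c → c ≤ x₀ - δ → ‖∫ x in a..c, f x‖ ≤ B)
    (hright : ∀ c, x₀ + δ ≤ c → c < b → ‖∫ x in c..b, f x‖ ≤ B) :
    ‖∫ x in a..b, f x‖ ≤ 2 * B + 2 * δ := by
  have hab : a ≤ b := hx₀.1.trans hx₀.2
  have hpiece : ∀ c d, a ≤ c → c ≤ d → d ≤ b → IntervalIntegrable f volume c d :=
    fun c d hac hcd hdb => hf.mono_set (by
      rw [uIcc_of_le hcd, uIcc_of_le hab]; exact Icc_subset_Icc hac hdb)
  set c₁ := max a (x₀ - δ)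
  set c₂ := min b (x₀ + δ)
  have hac₁ : a ≤ c₁ := le_max_left _ _
  have hc₁c₂ : c₁ ≤ c₂ := max_le (le_min hab (by linarith [hx₀.1]))
    (le_min (by linarith [hx₀.2]) (by linarith))
  have hc₂b : c₂ ≤ b := min_le_left _ _
  have hB₁ : ‖∫ x in a..c₁, f x‖ ≤ B := by
    rcases le_or_gt (x₀ - δ) a with h | h
    · rw [show c₁ = a from max_eq_left h, intervalIntegral.integral_same, norm_zero]; exact hB
    · rw [show c₁ = x₀ - δ from max_eq_right h.le]; exact hleft _ h le_rfl
  have hB₃ : ‖∫ x in c₂..b, f x‖ ≤ B := by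
    rcases le_or_gt b (x₀ + δ) with h | h
    · rw [show c₂ = b from min_eq_left h, intervalIntegral.integral_same, norm_zero]; exact hB
    · rw [show c₂ = x₀ + δ from min_eq_right h.le]; exact hright _ le_rfl h
  have hB₂ : ‖∫ x in c₁..c₂, f x‖ ≤ 2 * δ := by
    refine (intervalIntegral.norm_integral_le_of_norm_le_const (C := 1) fun x hx => ?_).trans ?_
    · rw [uIoc_of_le hc₁c₂] at hx
      exact hf1 x ⟨hac₁.trans hx.1.le, hx.2.trans hc₂b⟩
    · rw [one_mul, abs_of_nonneg (sub_nonneg.2 hc₁c₂)]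
      linarith [le_max_right a (x₀ - δ), min_le_right b (x₀ + δ)]
  calc ‖∫ x in a..b, f x‖
      ≤ ‖∫ x in a..c₁, f x‖ + ‖∫ x in c₁..c₂, f x‖ + ‖∫ x in c₂..b, f x‖ :=
        norm_integral_le_of_adjacent_intervals (hpiece _ _ le_rfl hac₁ (hc₁c₂.trans hc₂b))
          (hpiece _ _ hac₁ hc₁c₂ hc₂b) (hpiece _ _ (hac₁.trans hc₁c₂) hc₂b le_rfl)
    _ ≤ 2 * B + 2 * δ := by linarith

section VanDerCorput

variable {φ φ' φ'' φ''' : ℝ → ℝ} {a b lam : ℝ}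

/-- Integration by parts, from `e^{iφ} = (i φ')⁻¹ (e^{iφ})'`. -/
lemma integral_expPhase_eq (hab : a ≤ b)
    (hφ : ∀ x ∈ Icc a b, HasDerivAt φ (φ' x) x) (hφ' : ∀ x ∈ Icc a b, HasDerivAt φ' (φ'' x) x)
    (hφ'' : ContinuousOn φ'' (Icc a b)) (hne : ∀ x ∈ Icc a b, φ' x ≠ 0) :
    ∫ x in a..b, expPhase φ x =
      -Complex.I * ((φ' b : ℂ)⁻¹ * expPhase φ b - (φ' a : ℂ)⁻¹ * expPhase φ a) -
        ∫ x in a..b, Complex.I * (φ'' x / φ' x ^ 2 : ℝ) * expPhase φ x := by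
  rw [← uIcc_of_le hab] at hφ hφ' hφ'' hne
  have hne' : ∀ x ∈ uIcc a b, (φ' x : ℂ) ≠ 0 := fun x hx => Complex.ofReal_ne_zero.2 (hne x hx)
  have hφ'c : ContinuousOn φ' (uIcc a b) := fun x hx => (hφ' x hx).continuousAt.continuousWithinAt
  have hu (x) (hx : x ∈ uIcc a b) : HasDerivAt (fun y => -Complex.I * (φ' y : ℂ)⁻¹)
      (Complex.I * (φ'' x / φ' x ^ 2 : ℝ)) x := by
    refine (((hφ' x hx).ofReal_comp.inv (hne' x hx)).const_mul (-Complex.I)).congr_deriv ?_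
    push_cast
    ring
  have hv (x) (hx : x ∈ uIcc a b) := hasDerivAt_expPhase (hφ x hx)
  have hibp := intervalIntegral.integral_mul_deriv_eq_deriv_mul hu hv
    ((continuousOn_const.mul (Complex.continuous_ofReal.comp_continuousOn
      (hφ''.div (hφ'c.pow 2) fun x hx => pow_ne_zero 2 (hne x hx)))).intervalIntegrable)
    (((continuousOn_const.mul (Complex.continuous_ofReal.comp_continuousOn hφ'c)).mul
      (continuousOn_expPhase fun x hx =>
        (hφ x hx).continuousAt.continuousWithinAt)).intervalIntegrable)
  rw [mul_sub, ← mul_assoc, ← mul_assoc, ← hibp]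
  refine intervalIntegral.integral_congr fun x hx => ?_
  field_simp [hne' x hx]
  ring_nf
  rw [Complex.I_sq]
  ring

lemma norm_integral_expPhase_le_of_abs_deriv_ge (hab : a ≤ b) (hlam : 0 < lam)
    (hφ : ∀ x ∈ Icc a b, HasDerivAt φ (φ' x) x)
    (hφ' : ∀ x ∈ Icc a b, HasDerivAt φ' (φ'' x) x) (hφ'' : ContinuousOn φ'' (Icc a b))
    (hφ''_nonneg : ∀ x ∈ Icc a b, 0 ≤ φ'' x) (hlow : ∀ x ∈ Icc a b, lam ≤ |φ' x|) :
    ‖∫ x in a..b, expPhase φ x‖ ≤ 4 / lam := by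
  have hne : ∀ x ∈ Icc a b, φ' x ≠ 0 := fun x hx h => by
    have := hlow x hx; rw [h, abs_zero] at this; linarith
  have hinv : ∀ x ∈ Icc a b, |(φ' x)⁻¹| ≤ lam⁻¹ := fun x hx => by
    rw [abs_inv]; exact inv_anti₀ hlam (hlow x hx)
  have ha : a ∈ Icc a b := left_mem_Icc.2 hab
  have hb : b ∈ Icc a b := right_mem_Icc.2 hab
  have hboundary : ‖-Complex.I * ((φ' b : ℂ)⁻¹ * expPhase φ b - (φ' a : ℂ)⁻¹ * expPhase φ a)‖
      ≤ 2 * lam⁻¹ := by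
    refine (norm_mul_le _ _).trans ?_
    refine (mul_le_of_le_one_left (norm_nonneg _) (by simp)).trans ?_
    refine (norm_sub_le _ _).trans ?_
    simp only [norm_mul, norm_expPhase, mul_one, ← Complex.ofReal_inv, Complex.norm_real,
      Real.norm_eq_abs]
    linarith [hinv a ha, hinv b hb]
  have hvariation : ∫ x in a..b, φ'' x / φ' x ^ 2 = -(φ' b)⁻¹ - -(φ' a)⁻¹ := by
    rw [← uIcc_of_le hab] at hφ' hφ'' hne
    have hφ'c : ContinuousOn φ' (uIcc a b) :=
      fun x hx => (hφ' x hx).continuousAt.continuousWithinAt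
    refine intervalIntegral.integral_eq_sub_of_hasDerivAt (f := fun y => -(φ' y)⁻¹)
      (fun x hx => ((hφ' x hx).inv (hne x hx)).neg.congr_deriv (by ring)) ?_
    exact (hφ''.div (hφ'c.pow 2) fun x hx => pow_ne_zero 2 (hne x hx)).intervalIntegrable
  -- as `φ'' ≥ 0`, the integral of `|(1/φ')'|` telescopes
  have hbulk : ‖∫ x in a..b, Complex.I * (φ'' x / φ' x ^ 2 : ℝ) * expPhase φ x‖ ≤ 2 * lam⁻¹ := by
    calc _ ≤ ∫ x in a..b, ‖Complex.I * (φ'' x / φ' x ^ 2 : ℝ) * expPhase φ x‖ :=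
          intervalIntegral.norm_integral_le_integral_norm hab
      _ = ∫ x in a..b, φ'' x / φ' x ^ 2 := by
          refine intervalIntegral.integral_congr fun x hx => ?_
          rw [uIcc_of_le hab] at hx
          simp [abs_of_nonneg (hφ''_nonneg x hx)]
      _ ≤ 2 * lam⁻¹ := by
          rw [hvariation]
          linarith [(abs_le.1 (hinv a ha)).2, (abs_le.1 (hinv b hb)).1]
  rw [integral_expPhase_eq hab hφ hφ' hφ'' hne, div_eq_mul_inv]
  linarith [norm_sub_le (-Complex.I * ((φ' b : ℂ)⁻¹ * expPhase φ b - (φ' a : ℂ)⁻¹ * expPhase φ a))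
    (∫ x in a..b, Complex.I * (φ'' x / φ' x ^ 2 : ℝ) * expPhase φ x)]

lemma norm_integral_expPhase_le_of_second_deriv_ge (hab : a ≤ b) (hlam : 0 < lam)
    (hφ : ∀ x ∈ Icc a b, HasDerivAt φ (φ' x) x) (hφ' : ∀ x ∈ Icc a b, HasDerivAt φ' (φ'' x) x)
    (hφ'' : ContinuousOn φ'' (Icc a b)) (hlow : ∀ x ∈ Icc a b, lam ≤ φ'' x) :
    ‖∫ x in a..b, expPhase φ x‖ ≤ 10 * lam ^ (-(1 / 2 : ℝ)) := by
  -- this `δ` balances the tails `4 / (δ lam)` against the window `2δ`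
  set δ := lam ^ (-(1 / 2 : ℝ))
  have hδ : 0 < δ := rpow_pos_of_pos hlam _
  have hδlam : 0 < δ * lam := mul_pos hδ hlam
  obtain ⟨x₀, hx₀, hpivot⟩ := exists_pivot_of_le_hasDerivAt hab hφ' hlow
  have htail : ∀ c d, a ≤ c → d ≤ b → c ≤ d → (∀ x ∈ Icc c d, δ * lam ≤ |φ' x|) →
      ‖∫ x in c..d, expPhase φ x‖ ≤ 4 / (δ * lam) := fun c d hac hdb hcd hfar =>
    have hsub : Icc c d ⊆ Icc a b := Icc_subset_Icc hac hdb
    norm_integral_expPhase_le_of_abs_deriv_ge hcd hδlam (fun x hx => hφ x (hsub hx))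
      (fun x hx => hφ' x (hsub hx)) (hφ''.mono hsub)
      (fun x hx => hlam.le.trans (hlow x (hsub hx))) hfar
  have hφcont : ContinuousOn φ (Icc a b) := fun x hx => (hφ x hx).continuousAt.continuousWithinAt
  have hbound := norm_integral_le_of_norm_integral_tails_le hx₀ hδ.le (by positivity)
    ((continuousOn_expPhase hφcont).intervalIntegrable_of_Icc hab)
    (fun x _ => (norm_expPhase φ x).le)
    (fun c hac hc => htail a c le_rfl (by linarith [hx₀.2]) hac.le fun x hx => by
      have := (hpivot x ⟨hx.1, by linarith [hx.2, hx₀.2]⟩).1 (by linarith [hx.2])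
      rw [abs_of_neg (by nlinarith [hx.2])]
      nlinarith [hx.2])
    (fun c hc hcb => htail c b (by linarith [hx₀.1]) le_rfl hcb.le fun x hx => by
      have := (hpivot x ⟨by linarith [hx.1, hx₀.1], hx.2⟩).2 (by linarith [hx.1])
      rw [abs_of_pos (by nlinarith [hx.1])]
      nlinarith [hx.1])
  have hδ_eq : 4 / (δ * lam) = 4 * δ := by
    rw [mul_comm, ← rpow_one_add' hlam.le (by norm_num), div_eq_mul_inv, ← rpow_neg hlam.le]
    norm_num
    rfl
  linarith

lemma norm_integral_expPhase_le_of_second_deriv_le_neg (hab : a ≤ b) (hlam : 0 < lam)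
    (hφ : ∀ x ∈ Icc a b, HasDerivAt φ (φ' x) x) (hφ' : ∀ x ∈ Icc a b, HasDerivAt φ' (φ'' x) x)
    (hφ'' : ContinuousOn φ'' (Icc a b)) (hup : ∀ x ∈ Icc a b, φ'' x ≤ -lam) :
    ‖∫ x in a..b, expPhase φ x‖ ≤ 10 * lam ^ (-(1 / 2 : ℝ)) := by
  rw [← norm_integral_expPhase_neg]
  exact norm_integral_expPhase_le_of_second_deriv_ge hab hlam (fun x hx => (hφ x hx).neg)
    (fun x hx => (hφ' x hx).neg) hφ''.neg fun x hx => le_neg_of_le_neg (hup x hx)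

lemma norm_integral_expPhase_le_of_third_deriv_ge (hab : a ≤ b) (hlam : 0 < lam)
    (hφ : ∀ x ∈ Icc a b, HasDerivAt φ (φ' x) x) (hφ' : ∀ x ∈ Icc a b, HasDerivAt φ' (φ'' x) x)
    (hφ'' : ∀ x ∈ Icc a b, HasDerivAt φ'' (φ''' x) x) (hlow : ∀ x ∈ Icc a b, lam ≤ φ''' x) :
    ‖∫ x in a..b, expPhase φ x‖ ≤ 22 * lam ^ (-(1 / 3 : ℝ)) := by
  set δ := lam ^ (-(1 / 3 : ℝ))
  have hδ : 0 < δ := rpow_pos_of_pos hlam _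
  have hδlam : 0 < δ * lam := mul_pos hδ hlam
  obtain ⟨x₀, hx₀, hpivot⟩ := exists_pivot_of_le_hasDerivAt hab hφ'' hlow
  have hφ''cont : ContinuousOn φ'' (Icc a b) :=
    fun x hx => (hφ'' x hx).continuousAt.continuousWithinAt
  have hφcont : ContinuousOn φ (Icc a b) := fun x hx => (hφ x hx).continuousAt.continuousWithinAt
  have hbound := norm_integral_le_of_norm_integral_tails_le hx₀ hδ.le (by positivity)
    ((continuousOn_expPhase hφcont).intervalIntegrable_of_Icc hab)
    (fun x _ => (norm_expPhase φ x).le)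
    (fun c hac hc =>
      have hsub : Icc a c ⊆ Icc a b := Icc_subset_Icc le_rfl (by linarith [hx₀.2])
      norm_integral_expPhase_le_of_second_deriv_le_neg hac.le hδlam (fun x hx => hφ x (hsub hx))
        (fun x hx => hφ' x (hsub hx)) (hφ''cont.mono hsub) fun x hx => by
          have := (hpivot x (hsub hx)).1 (by linarith [hx.2])
          nlinarith [hx.2])
    (fun c hc hcb =>
      have hsub : Icc c b ⊆ Icc a b := Icc_subset_Icc (by linarith [hx₀.1]) le_rfl
      norm_integral_expPhase_le_of_second_deriv_ge hcb.le hδlam (fun x hx => hφ x (hsub hx))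
        (fun x hx => hφ' x (hsub hx)) (hφ''cont.mono hsub) fun x hx => by
          have := (hpivot x (hsub hx)).2 (by linarith [hx.1])
          nlinarith [hx.1])
  have hδ_eq : (δ * lam) ^ (-(1 / 2 : ℝ)) = δ := by
    rw [mul_comm, ← rpow_one_add' hlam.le (by norm_num), ← rpow_mul hlam.le]
    norm_num
    rfl
  linarith

end VanDerCorput

lemma half_le_cos_of_abs_le {ξ : ℝ} (h : |ξ| ≤ π / 3) : 1 / 2 ≤ cos ξ := by
  rw [← cos_abs, ← cos_pi_div_three]
  exact cos_le_cos_of_nonneg_of_le_pi (abs_nonneg ξ) (by linarith [pi_pos]) h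

lemma rpow_neg_one_third_le_two_mul {x y : ℝ} (hx : 0 < x) (hxy : y ≤ 2 * x) (hy : 0 < y) :
    x ^ (-(1 / 3 : ℝ)) ≤ 2 * y ^ (-(1 / 3 : ℝ)) := by
  have htwo : (1 / 2 : ℝ) ≤ 2 ^ (-(1 / 3 : ℝ)) := by
    calc (1 / 2 : ℝ) = 2 ^ (-1 : ℝ) := by norm_num
      _ ≤ 2 ^ (-(1 / 3 : ℝ)) := rpow_le_rpow_of_exponent_le one_le_two (by norm_num)
  have hmono : (2 * x) ^ (-(1 / 3 : ℝ)) ≤ y ^ (-(1 / 3 : ℝ)) :=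
    rpow_le_rpow_of_nonpos hy hxy (by norm_num)
  rw [mul_rpow zero_le_two hx.le] at hmono
  nlinarith [rpow_pos_of_pos hx (-(1 / 3 : ℝ))]

/-- The phase of the kernel, from `4 sin²(ξ/2) = 2 - 2 cos ξ`. -/
noncomputable def schrodingerPhase (t j ξ : ℝ) : ℝ := 2 * t * cos ξ - 2 * t + j * ξ

lemma schrodingerKernel_eq (t : ℝ) (j : ℤ) :
    schrodingerKernel t j = (1 / (2 * π)) * ∫ ξ in -π..π, expPhase (schrodingerPhase t j) ξ := by
  unfold schrodingerKernel
  congr 1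
  refine intervalIntegral.integral_congr fun ξ _ => ?_
  have hsin : sin (ξ / 2) ^ 2 = 1 / 2 - cos ξ / 2 := by
    rw [sin_sq_eq_half_sub, show 2 * (ξ / 2) = ξ by ring]
  rw [expPhase, ← Complex.exp_add, schrodingerPhase, ← Complex.ofReal_pow, hsin]
  push_cast
  ring_nf

section Phase

variable (t j : ℝ)

lemma continuous_schrodingerPhase : Continuous (schrodingerPhase t j) := by
  unfold schrodingerPhase; fun_prop

lemma hasDerivAt_schrodingerPhase (ξ : ℝ) :
    HasDerivAt (schrodingerPhase t j) (-2 * t * sin ξ + j) ξ := by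
  have := (((hasDerivAt_cos ξ).const_mul (2 * t)).sub_const (2 * t)).add
    ((hasDerivAt_id ξ).const_mul j)
  exact this.congr_deriv (by simp)

lemma hasDerivAt_schrodingerPhase_deriv (ξ : ℝ) :
    HasDerivAt (fun ξ => -2 * t * sin ξ + j) (-2 * t * cos ξ) ξ :=
  ((hasDerivAt_sin ξ).const_mul (-2 * t)).add_const j

lemma hasDerivAt_schrodingerPhase_deriv2 (ξ : ℝ) :
    HasDerivAt (fun ξ => -2 * t * cos ξ) (2 * t * sin ξ) ξ :=
  ((hasDerivAt_cos ξ).const_mul (-2 * t)).congr_deriv (by ring)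

lemma schrodingerPhase_neg (ξ : ℝ) : schrodingerPhase t j (-ξ) = schrodingerPhase t (-j) ξ := by
  simp only [schrodingerPhase, cos_neg]; ring

lemma schrodingerPhase_neg_neg (ξ : ℝ) :
    schrodingerPhase (-t) (-j) ξ = -schrodingerPhase t j ξ := by
  simp only [schrodingerPhase]; ring

lemma intervalIntegrable_expPhase_schrodingerPhase (a b : ℝ) :
    IntervalIntegrable (expPhase (schrodingerPhase t j)) volume a b :=
  (continuousOn_expPhase (continuous_schrodingerPhase t j).continuousOn).intervalIntegrable

end Phase

lemma norm_integral_expPhase_schrodingerPhase_zero_pi_le {t : ℝ} (ht : 1 ≤ t) (j : ℝ) :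
    ‖∫ ξ in 0..π, expPhase (schrodingerPhase t j) ξ‖ ≤ 42 * t ^ (-(1 / 3 : ℝ)) := by
  have htpos : 0 < t := one_pos.trans_le ht
  have hφ (ξ) (_ : ξ ∈ Icc (0 : ℝ) π) := hasDerivAt_schrodingerPhase t j ξ
  have hφ' (ξ) (_ : ξ ∈ Icc (0 : ℝ) π) := hasDerivAt_schrodingerPhase_deriv t j ξ
  have hφ'' (ξ) (_ : ξ ∈ Icc (0 : ℝ) π) := hasDerivAt_schrodingerPhase_deriv2 t ξ
  have hI := intervalIntegrable_expPhase_schrodingerPhase t j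
  have hcont : ContinuousOn (fun ξ => -2 * t * cos ξ) (Icc 0 π) := by fun_prop
  have hB₁ : ‖∫ ξ in 0..π / 3, expPhase (schrodingerPhase t j) ξ‖ ≤ 10 * t ^ (-(1 / 2 : ℝ)) := by
    have h : Icc 0 (π / 3) ⊆ Icc 0 π := Icc_subset_Icc le_rfl (by linarith [pi_pos])
    refine norm_integral_expPhase_le_of_second_deriv_le_neg (by positivity) htpos
      (fun x hx => hφ x (h hx)) (fun x hx => hφ' x (h hx)) (hcont.mono h) fun ξ hξ => ?_
    have := half_le_cos_of_abs_le (abs_le.2 ⟨by linarith [hξ.1, pi_pos], hξ.2⟩)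
    nlinarith
  have hB₂ : ‖∫ ξ in π / 3..2 * π / 3, expPhase (schrodingerPhase t j) ξ‖
      ≤ 22 * t ^ (-(1 / 3 : ℝ)) := by
    have h : Icc (π / 3) (2 * π / 3) ⊆ Icc 0 π :=
      Icc_subset_Icc (by positivity) (by linarith [pi_pos])
    refine norm_integral_expPhase_le_of_third_deriv_ge (by linarith [pi_pos]) htpos
      (fun x hx => hφ x (h hx)) (fun x hx => hφ' x (h hx)) (fun x hx => hφ'' x (h hx))
      fun ξ hξ => ?_
    have := half_le_cos_of_abs_le (ξ := ξ - π / 2)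
      (abs_le.2 ⟨by linarith [hξ.1, pi_pos], by linarith [hξ.2, pi_pos]⟩)
    rw [cos_sub_pi_div_two] at this
    nlinarith
  have hB₃ : ‖∫ ξ in 2 * π / 3..π, expPhase (schrodingerPhase t j) ξ‖
      ≤ 10 * t ^ (-(1 / 2 : ℝ)) := by
    have h : Icc (2 * π / 3) π ⊆ Icc 0 π := Icc_subset_Icc (by positivity) le_rfl
    refine norm_integral_expPhase_le_of_second_deriv_ge (by linarith [pi_pos]) htpos
      (fun x hx => hφ x (h hx)) (fun x hx => hφ' x (h hx)) (hcont.mono h) fun ξ hξ => ?_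
    have := half_le_cos_of_abs_le (ξ := π - ξ)
      (abs_le.2 ⟨by linarith [hξ.2, pi_pos], by linarith [hξ.1, pi_pos]⟩)
    rw [cos_pi_sub] at this
    nlinarith
  have hhalf : t ^ (-(1 / 2 : ℝ)) ≤ t ^ (-(1 / 3 : ℝ)) :=
    rpow_le_rpow_of_exponent_le ht (by norm_num)
  linarith [norm_integral_le_of_adjacent_intervals (hI 0 (π / 3)) (hI (π / 3) (2 * π / 3))
    (hI (2 * π / 3) π)]

lemma norm_integral_expPhase_schrodingerPhase_le {t : ℝ} (ht : 1 ≤ |t|) (j : ℝ) :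
    ‖∫ ξ in -π..π, expPhase (schrodingerPhase t j) ξ‖ ≤ 84 * |t| ^ (-(1 / 3 : ℝ)) := by
  wlog htpos : 0 ≤ t generalizing t j
  · have hneg : schrodingerPhase t j = fun ξ => -schrodingerPhase (-t) (-j) ξ := by
      funext ξ; rw [schrodingerPhase_neg_neg, neg_neg]
    rw [hneg, norm_integral_expPhase_neg, ← abs_neg t]
    exact this (by rwa [abs_neg]) (-j) (by linarith)
  rw [abs_of_nonneg htpos] at ht ⊢
  have hreflect : ∫ ξ in -π..0, expPhase (schrodingerPhase t j) ξ
      = ∫ ξ in 0..π, expPhase (schrodingerPhase t (-j)) ξ := by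
    have hflip (ξ : ℝ) : expPhase (schrodingerPhase t (-j)) ξ
        = expPhase (schrodingerPhase t j) (-ξ) := by
      rw [expPhase, expPhase, schrodingerPhase_neg]
    rw [intervalIntegral.integral_congr fun ξ _ => hflip ξ, intervalIntegral.integral_comp_neg,
      neg_zero]
  rw [← intervalIntegral.integral_add_adjacent_intervals
    (intervalIntegrable_expPhase_schrodingerPhase t j _ _)
    (intervalIntegrable_expPhase_schrodingerPhase t j _ _), hreflect]
  linarith [norm_add_le (∫ ξ in 0..π, expPhase (schrodingerPhase t (-j)) ξ)
      (∫ ξ in 0..π, expPhase (schrodingerPhase t j) ξ),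
    norm_integral_expPhase_schrodingerPhase_zero_pi_le ht (-j),
    norm_integral_expPhase_schrodingerPhase_zero_pi_le ht j]

lemma norm_schrodingerKernel_le (t : ℝ) (j : ℤ) :
    ‖schrodingerKernel t j‖ ≤ 28 * (1 + |t|) ^ (-(1 / 3 : ℝ)) := by
  have hpi : 3 < π := pi_gt_three
  have hprefactor : ‖(1 / (2 * π) : ℂ)‖ = 1 / (2 * π) := by
    rw [show (1 / (2 * π) : ℂ) = ((1 / (2 * π) : ℝ) : ℂ) by push_cast; rfl, Complex.norm_real,
      norm_of_nonneg (by positivity)]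
  rw [schrodingerKernel_eq, norm_mul, hprefactor, div_mul_eq_mul_div, one_mul,
    div_le_iff₀ (by positivity)]
  rcases le_total |t| 1 with ht | ht
  · have := rpow_neg_one_third_le_two_mul one_pos (by linarith : 1 + |t| ≤ 2 * 1) (by positivity)
    rw [one_rpow] at this
    nlinarith [norm_integral_expPhase_le_length (schrodingerPhase t j) (neg_le_self pi_pos.le)]
  · have := rpow_neg_one_third_le_two_mul (by linarith) (by linarith : 1 + |t| ≤ 2 * |t|)
      (by positivity)
    nlinarith [norm_integral_expPhase_schrodingerPhase_le ht j,
      rpow_pos_of_pos (by linarith : 0 < |t|) (-(1 / 3 : ℝ))]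

/-- Dispersive decay for the discrete Schrödinger equation on the positive integers with
Neumann boundary condition `u(t,0) = u(t,1)`; the solution is given by even reflection of
the whole-line kernel across `j = 1/2`. -/
theorem discrete_schrodinger_neumann_decay :
    ∃ C > 0, ∀ (t : ℝ) (φ : {k : ℤ // 1 ≤ k} → ℂ),
      Summable (fun k : {k : ℤ // 1 ≤ k} => ‖φ k‖) →
      ∀ j : ℤ, 1 ≤ j →
        ‖∑' k : {k : ℤ // 1 ≤ k},
            (schrodingerKernel t (j - k.1) + schrodingerKernel t (j + k.1 - 1)) * φ k‖ ≤
          C * (1 + |t|) ^ (-(1 / 3 : ℝ)) * ∑' k : {k : ℤ // 1 ≤ k}, ‖φ k‖ := by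
  refine ⟨56, by norm_num, fun t φ hφ j _ => ?_⟩
  refine tsum_of_norm_bounded (hφ.hasSum.mul_left _) fun k => ?_
  rw [norm_mul]
  gcongr
  linarith [norm_add_le (schrodingerKernel t (j - k.1)) (schrodingerKernel t (j + k.1 - 1)),
    norm_schrodingerKernel_le t (j - k.1), norm_schrodingerKernel_le t (j + k.1 - 1)]
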